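/- arXiv:1510.03110 — 7 statements merged into one kernel-verified Lean document; each statement's English description precedes it below -/
import Mathlib

section
/- One-step dynamic-programming (backward recursion) correctness: for every x ∈ ℝ^{n_x}, the function w ↦ ½ [x;w]ᵀ Q [x;w] + lᵀ [x;w] + c + ½ (Ax+Bw+a)ᵀ P' (Ax+Bw+a) − Ψ'ᵀ (Ax+Bw+a) + c̄' attains its minimum over w ∈ ℝ^{n_w} uniquely at w = k + Kx, and the minimum value equals ½ xᵀ P x − Ψᵀ x + c̄. -/
/-!
For fixed `x` the cost is `½ wᵀ G w + bᵀ w + r` as a function of `w`, and the Riccati formulas say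
exactly that `w₀ = k + K x` solves the first-order condition `G w₀ = -b`. Completing the square,
`cost w = cost w₀ + ½ (w - w₀)ᵀ G (w - w₀)`, so `G ≻ 0` makes `w₀` the unique minimiser; the
minimum `r - ½ w₀ᵀ G w₀` expands, using `Kᵀ G = -H`, to `½ xᵀ P x - Ψᵀ x + c̄`.
-/

open Matrix

/-- One-step cost-to-go function. -/
noncomputable def oneStepCost (nx nw : ℕ)
    (A : Matrix (Fin nx) (Fin nx) ℝ) (B : Matrix (Fin nx) (Fin nw) ℝ) (a : Fin nx → ℝ)
    (Qx : Matrix (Fin nx) (Fin nx) ℝ) (Qxw : Matrix (Fin nx) (Fin nw) ℝ)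
    (Qw : Matrix (Fin nw) (Fin nw) ℝ)
    (lx : Fin nx → ℝ) (lw : Fin nw → ℝ) (c : ℝ)
    (P' : Matrix (Fin nx) (Fin nx) ℝ) (Ψ' : Fin nx → ℝ) (cb' : ℝ)
    (x : Fin nx → ℝ) (w : Fin nw → ℝ) : ℝ :=
  (1 / 2) * (Sum.elim x w ⬝ᵥ (Matrix.fromBlocks Qx Qxw Qxwᵀ Qw *ᵥ Sum.elim x w))
    + Sum.elim lx lw ⬝ᵥ Sum.elim x w + c
    + (1 / 2) * ((A *ᵥ x + B *ᵥ w + a) ⬝ᵥ (P' *ᵥ (A *ᵥ x + B *ᵥ w + a)))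
    - Ψ' ⬝ᵥ (A *ᵥ x + B *ᵥ w + a) + cb'

namespace Matrix

variable {m n : Type*} [Fintype n]

lemma mulVec_dotProduct_eq_transpose [Fintype m] (M : Matrix m n ℝ) (v : n → ℝ) (u : m → ℝ) :
    (M *ᵥ v) ⬝ᵥ u = v ⬝ᵥ (Mᵀ *ᵥ u) := by
  rw [dotProduct_comm, dotProduct_transpose_mulVec]

lemma IsSymm.dotProduct_mulVec_comm {G : Matrix n n ℝ} (hG : G.IsSymm) (u v : n → ℝ) :
    u ⬝ᵥ (G *ᵥ v) = v ⬝ᵥ (G *ᵥ u) := by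
  rw [← dotProduct_transpose_mulVec, hG.eq]

noncomputable def quadraticCost (G : Matrix n n ℝ) (b w : n → ℝ) : ℝ :=
  (1 / 2) * (w ⬝ᵥ (G *ᵥ w)) + w ⬝ᵥ b

variable {G : Matrix n n ℝ} {b w₀ : n → ℝ}

lemma quadraticCost_of_mulVec_eq_neg (hw₀ : G *ᵥ w₀ = -b) :
    quadraticCost G b w₀ = -((1 / 2) * (w₀ ⬝ᵥ (G *ᵥ w₀))) := by
  rw [quadraticCost, hw₀, dotProduct_neg]
  ring

lemma IsSymm.quadraticCost_eq_add_quadraticCost (hG : G.IsSymm) (hw₀ : G *ᵥ w₀ = -b)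
    (w : n → ℝ) :
    quadraticCost G b w = (1 / 2) * ((w - w₀) ⬝ᵥ (G *ᵥ (w - w₀))) + quadraticCost G b w₀ := by
  have hb : ∀ v, v ⬝ᵥ b = -(v ⬝ᵥ (G *ᵥ w₀)) := fun v => by rw [hw₀, dotProduct_neg, neg_neg]
  simp only [quadraticCost, mulVec_sub, dotProduct_sub, sub_dotProduct, hb,
    hG.dotProduct_mulVec_comm w₀ w]
  ring

lemma PosDef.quadraticCost_lt (hG : G.PosDef) (hw₀ : G *ᵥ w₀ = -b) {w : n → ℝ} (hw : w ≠ w₀) :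
    quadraticCost G b w₀ < quadraticCost G b w := by
  have hpos := hG.dotProduct_mulVec_pos (sub_ne_zero.2 hw)
  rw [star_trivial] at hpos
  rw [(isHermitian_iff_isSymm.1 hG.1).quadraticCost_eq_add_quadraticCost hw₀ w]
  linarith

lemma IsSymm.half_dotProduct_mulVec_affine [Fintype m] (hG : G.IsSymm)
    (k : n → ℝ) (K : Matrix n m ℝ) (x : m → ℝ) :
    (1 / 2) * ((k + K *ᵥ x) ⬝ᵥ (G *ᵥ (k + K *ᵥ x)))
      = (1 / 2) * (k ⬝ᵥ (G *ᵥ k)) + x ⬝ᵥ ((Kᵀ * G) *ᵥ k)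
        + (1 / 2) * (x ⬝ᵥ ((Kᵀ * G * K) *ᵥ x)) := by
  simp only [mulVec_add, dotProduct_add, add_dotProduct, ← mulVec_mulVec,
    hG.dotProduct_mulVec_comm k, mulVec_dotProduct_eq_transpose K]
  ring

variable [DecidableEq n]

lemma mulVec_inv_mulVec_add_neg_inv_mul_mulVec [Fintype m] (hG : IsUnit G.det)
    (H : Matrix m n ℝ) (d : n → ℝ) (x : m → ℝ) :
    G *ᵥ (G⁻¹ *ᵥ d + -(G⁻¹ * Hᵀ) *ᵥ x) = d - Hᵀ *ᵥ x := by
  rw [mulVec_add, mulVec_mulVec, mul_nonsing_inv G hG, one_mulVec, mulVec_mulVec, Matrix.mul_neg,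
    mul_nonsing_inv_cancel_left (A := G) Hᵀ hG, neg_mulVec, sub_eq_add_neg]

lemma IsSymm.transpose_neg_inv_mul_transpose_mul (hGs : G.IsSymm) (hG : IsUnit G.det)
    (H : Matrix m n ℝ) : (-(G⁻¹ * Hᵀ))ᵀ * G = -H := by
  rw [transpose_neg, transpose_mul, transpose_transpose, transpose_nonsing_inv, hGs.eq,
    Matrix.neg_mul, Matrix.mul_assoc, nonsing_inv_mul G hG, Matrix.mul_one]

end Matrix

section OneStep

variable {nx nw : ℕ}
    {A : Matrix (Fin nx) (Fin nx) ℝ} {B : Matrix (Fin nx) (Fin nw) ℝ} {a : Fin nx → ℝ}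
    {Qx : Matrix (Fin nx) (Fin nx) ℝ} {Qxw : Matrix (Fin nx) (Fin nw) ℝ}
    {Qw : Matrix (Fin nw) (Fin nw) ℝ} {lx : Fin nx → ℝ} {lw : Fin nw → ℝ} {c : ℝ}
    {P' : Matrix (Fin nx) (Fin nx) ℝ} {Ψ' : Fin nx → ℝ} {cb' : ℝ}

lemma oneStepCost_zero (hP' : P'.IsSymm) (x : Fin nx → ℝ) :
    oneStepCost nx nw A B a Qx Qxw Qw lx lw c P' Ψ' cb' x 0
      = (1 / 2) * (x ⬝ᵥ ((Qx + Aᵀ * P' * A) *ᵥ x))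
        + (lx + Aᵀ *ᵥ (P' *ᵥ a) - Aᵀ *ᵥ Ψ') ⬝ᵥ x
        + ((1 / 2) * (a ⬝ᵥ (P' *ᵥ a)) - Ψ' ⬝ᵥ a + c + cb') := by
  simp only [oneStepCost, fromBlocks_mulVec, sumElim_dotProduct_sumElim, Sum.elim_comp_inl,
    Sum.elim_comp_inr, mulVec_zero, add_zero, dotProduct_zero, zero_dotProduct, mulVec_add,
    add_mulVec, dotProduct_add, add_dotProduct, sub_dotProduct, ← mulVec_mulVec,
    mulVec_dotProduct_eq_transpose A, hP'.dotProduct_mulVec_comm a]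
  rw [← dotProduct_transpose_mulVec A x Ψ', dotProduct_comm (Aᵀ *ᵥ _) x,
    dotProduct_comm (Aᵀ *ᵥ _) x]
  ring

lemma oneStepCost_eq (hP' : P'.IsSymm) (x : Fin nx → ℝ) (w : Fin nw → ℝ) :
    oneStepCost nx nw A B a Qx Qxw Qw lx lw c P' Ψ' cb' x w
      = quadraticCost (Qw + Bᵀ * P' * B)
          ((Qxw + Aᵀ * P' * B)ᵀ *ᵥ x + lw + Bᵀ *ᵥ (P' *ᵥ a) - Bᵀ *ᵥ Ψ') w
        + oneStepCost nx nw A B a Qx Qxw Qw lx lw c P' Ψ' cb' x 0 := by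
  simp only [oneStepCost, quadraticCost, fromBlocks_mulVec, sumElim_dotProduct_sumElim,
    Sum.elim_comp_inl, Sum.elim_comp_inr, mulVec_zero, add_zero, dotProduct_zero, zero_dotProduct,
    mulVec_add, add_mulVec, dotProduct_add, add_dotProduct, dotProduct_sub, transpose_add,
    transpose_mul, transpose_transpose, hP'.eq, ← mulVec_mulVec]
  rw [← dotProduct_transpose_mulVec Qxw w x, dotProduct_comm lw, dotProduct_comm Ψ' (B *ᵥ w),
    hP'.dotProduct_mulVec_comm _ (B *ᵥ w), hP'.dotProduct_mulVec_comm a (B *ᵥ w)]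
  simp only [mulVec_dotProduct_eq_transpose B]
  ring

end OneStep

theorem one_step_dp_correct_general
    (nx nw : ℕ)
    (A : Matrix (Fin nx) (Fin nx) ℝ) (B : Matrix (Fin nx) (Fin nw) ℝ) (a : Fin nx → ℝ)
    (Qx : Matrix (Fin nx) (Fin nx) ℝ) (Qxw : Matrix (Fin nx) (Fin nw) ℝ)
    (Qw : Matrix (Fin nw) (Fin nw) ℝ)
    (lx : Fin nx → ℝ) (lw : Fin nw → ℝ) (c : ℝ)
    (P' : Matrix (Fin nx) (Fin nx) ℝ) (Ψ' : Fin nx → ℝ) (cb' : ℝ)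
    (hP' : P'.PosSemidef)
    -- Riccati step quantities
    (F G H : _) (K : Matrix (Fin nw) (Fin nx) ℝ) (k : Fin nw → ℝ)
    (P : Matrix (Fin nx) (Fin nx) ℝ) (Ψ : Fin nx → ℝ) (cb : ℝ)
    (hF : F = Qx + Aᵀ * P' * A)
    (hG : G = Qw + Bᵀ * P' * B)
    (hH : H = Qxw + Aᵀ * P' * B)
    (hGpd : G.PosDef)
    (hK : K = -(G⁻¹ * Hᵀ))
    (hk : k = G⁻¹ *ᵥ (Bᵀ *ᵥ Ψ' - lw - Bᵀ *ᵥ (P' *ᵥ a)))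
    (hP : P = F - Kᵀ * G * K)
    (hΨ : Ψ = Aᵀ *ᵥ Ψ' - H *ᵥ k - lx - Aᵀ *ᵥ (P' *ᵥ a))
    (hcb : cb = cb' + (1 / 2) * (a ⬝ᵥ (P' *ᵥ a)) - Ψ' ⬝ᵥ a
                - (1 / 2) * (k ⬝ᵥ (G *ᵥ k)) + c) :
    ∀ x : Fin nx → ℝ,
      (∀ w : Fin nw → ℝ, w ≠ k + K *ᵥ x →
        oneStepCost nx nw A B a Qx Qxw Qw lx lw c P' Ψ' cb' x (k + K *ᵥ x)
          < oneStepCost nx nw A B a Qx Qxw Qw lx lw c P' Ψ' cb' x w)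
      ∧ oneStepCost nx nw A B a Qx Qxw Qw lx lw c P' Ψ' cb' x (k + K *ᵥ x)
          = (1 / 2) * (x ⬝ᵥ (P *ᵥ x)) - Ψ ⬝ᵥ x + cb := by
  have hP's : P'.IsSymm := isHermitian_iff_isSymm.1 hP'.1
  have hGs : G.IsSymm := isHermitian_iff_isSymm.1 hGpd.1
  have hGu : IsUnit G.det := isUnit_iff_ne_zero.2 hGpd.det_pos.ne'
  intro x
  have hstat : G *ᵥ (k + K *ᵥ x) = -(Hᵀ *ᵥ x + lw + Bᵀ *ᵥ (P' *ᵥ a) - Bᵀ *ᵥ Ψ') := by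
    rw [hk, hK, mulVec_inv_mulVec_add_neg_inv_mul_mulVec hGu]
    abel
  have hKG : Kᵀ * G = -H := hK ▸ hGs.transpose_neg_inv_mul_transpose_mul hGu H
  subst hG hH
  refine ⟨fun w hw => ?_, ?_⟩
  · rw [oneStepCost_eq hP's x w, oneStepCost_eq hP's x (k + K *ᵥ x)]
    exact add_lt_add_left (hGpd.quadraticCost_lt hstat hw) _
  rw [oneStepCost_eq hP's x, quadraticCost_of_mulVec_eq_neg hstat, oneStepCost_zero hP's,
    hP, hF, hΨ, hcb, hGs.half_dotProduct_mulVec_affine, hKG]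
  simp only [Matrix.neg_mul, neg_mulVec, sub_mulVec, sub_dotProduct, neg_dotProduct,
    add_dotProduct, dotProduct_comm x]
  ring

/-- One-step dynamic-programming (backward recursion) correctness. -/
theorem one_step_dp_correct
    (nx nw : ℕ)
    (A : Matrix (Fin nx) (Fin nx) ℝ) (B : Matrix (Fin nx) (Fin nw) ℝ) (a : Fin nx → ℝ)
    (Qx : Matrix (Fin nx) (Fin nx) ℝ) (Qxw : Matrix (Fin nx) (Fin nw) ℝ)
    (Qw : Matrix (Fin nw) (Fin nw) ℝ)
    (lx : Fin nx → ℝ) (lw : Fin nw → ℝ) (c : ℝ)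
    (P' : Matrix (Fin nx) (Fin nx) ℝ) (Ψ' : Fin nx → ℝ) (cb' : ℝ)
    (hQ : (Matrix.fromBlocks Qx Qxw Qxwᵀ Qw).PosSemidef)
    (hP' : P'.PosSemidef)
    -- Riccati step quantities
    (F G H : _) (K : Matrix (Fin nw) (Fin nx) ℝ) (k : Fin nw → ℝ)
    (P : Matrix (Fin nx) (Fin nx) ℝ) (Ψ : Fin nx → ℝ) (cb : ℝ)
    (hF : F = Qx + Aᵀ * P' * A)
    (hG : G = Qw + Bᵀ * P' * B)
    (hH : H = Qxw + Aᵀ * P' * B)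
    (hGpd : G.PosDef)
    (hK : K = -(G⁻¹ * Hᵀ))
    (hk : k = G⁻¹ *ᵥ (Bᵀ *ᵥ Ψ' - lw - Bᵀ *ᵥ (P' *ᵥ a)))
    (hP : P = F - Kᵀ * G * K)
    (hΨ : Ψ = Aᵀ *ᵥ Ψ' - H *ᵥ k - lx - Aᵀ *ᵥ (P' *ᵥ a))
    (hcb : cb = cb' + (1 / 2) * (a ⬝ᵥ (P' *ᵥ a)) - Ψ' ⬝ᵥ a
                - (1 / 2) * (k ⬝ᵥ (G *ᵥ k)) + c) :
    ∀ x : Fin nx → ℝ,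
      (∀ w : Fin nw → ℝ, w ≠ k + K *ᵥ x →
        oneStepCost nx nw A B a Qx Qxw Qw lx lw c P' Ψ' cb' x (k + K *ᵥ x)
          < oneStepCost nx nw A B a Qx Qxw Qw lx lw c P' Ψ' cb' x w)
      ∧ oneStepCost nx nw A B a Qx Qxw Qw lx lw c P' Ψ' cb' x (k + K *ᵥ x)
          = (1 / 2) * (x ⬝ᵥ (P *ᵥ x)) - Ψ ⬝ᵥ x + cb :=
  one_step_dp_correct_general nx nw A B a Qx Qxw Qw lx lw c P' Ψ' cb' hP' F G H K k P Ψ cb hF hG hH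
    hGpd hK hk hP hΨ hcb
end

section
/- Positive semidefiniteness preservation of the Riccati step: if Q = [[Q_x, Q_xw],[Q_xwᵀ, Q_w]] is symmetric positive semidefinite, P' is symmetric positive semidefinite, and G = Q_w + BᵀP'B is positive definite, then P = F − H G⁻¹ Hᵀ (where F = Q_x + AᵀP'A and H = Q_xw + AᵀP'B) is symmetric positive semidefinite. -/
open Matrix

/-!
The matrix `[[F, H], [Hᵀ, G]] = Q + [A B]ᵀ P' [A B]` is positive semidefinite as the sum of `Q` and
a congruence of `P'`, and `P = F - H G⁻¹ Hᵀ` is its Schur complement with respect to the positive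
definite block `G`; a Schur complement of a positive semidefinite matrix is positive semidefinite.
-/

namespace Matrix

variable {m n k R : Type*}

theorem fromBlocks_add_conjTranspose_fromCols_mul_mul_fromCols [Fintype k]
    [Semiring R] [StarRing R]
    (Q₁₁ : Matrix m m R) (Q₁₂ : Matrix m n R) (Q₂₁ : Matrix n m R) (Q₂₂ : Matrix n n R)
    (A : Matrix k m R) (B : Matrix k n R) (P : Matrix k k R) :
    fromBlocks Q₁₁ Q₁₂ Q₂₁ Q₂₂ + (fromCols A B)ᴴ * P * fromCols A B =
      fromBlocks (Q₁₁ + Aᴴ * P * A) (Q₁₂ + Aᴴ * P * B) (Q₂₁ + Bᴴ * P * A) (Q₂₂ + Bᴴ * P * B) := by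
  rw [conjTranspose_fromCols_eq_fromRows_conjTranspose, fromRows_mul, fromRows_mul_fromCols,
    fromBlocks_add]

variable [Finite m] [Fintype n] [DecidableEq n] [Fintype k]
  [Field R] [PartialOrder R] [StarRing R] [StarOrderedRing R]

theorem PosSemidef.sub_mul_inv_mul_conjTranspose_of_fromBlocks_add
    {Q₁₁ : Matrix m m R} {Q₁₂ : Matrix m n R} {Q₂₂ : Matrix n n R} {P : Matrix k k R}
    (hQ : (fromBlocks Q₁₁ Q₁₂ Q₁₂ᴴ Q₂₂).PosSemidef) (hP : P.PosSemidef)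
    (A : Matrix k m R) {B : Matrix k n R} (hG : (Q₂₂ + Bᴴ * P * B).PosDef) :
    (Q₁₁ + Aᴴ * P * A -
      (Q₁₂ + Aᴴ * P * B) * (Q₂₂ + Bᴴ * P * B)⁻¹ * (Q₁₂ + Aᴴ * P * B)ᴴ).PosSemidef := by
  have : Invertible (Q₂₂ + Bᴴ * P * B) := hG.isUnit.invertible
  have hH : (Q₁₂ + Aᴴ * P * B)ᴴ = Q₁₂ᴴ + Bᴴ * P * A := by
    simp only [conjTranspose_add, conjTranspose_mul, conjTranspose_conjTranspose,
      hP.isHermitian.eq, Matrix.mul_assoc]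
  have hBlocks := hQ.add (hP.conjTranspose_mul_mul_same (fromCols A B))
  rw [fromBlocks_add_conjTranspose_fromCols_mul_mul_fromCols, ← hH] at hBlocks
  exact (PosDef.fromBlocks₂₂ _ _ hG).mp hBlocks

end Matrix

/-- Positive semidefiniteness preservation of the Riccati step: the updated matrix
`P = F − H G⁻¹ Hᵀ` is symmetric positive semidefinite. -/
theorem riccati_step_posSemidef
    (nx nw : ℕ)
    (A : Matrix (Fin nx) (Fin nx) ℝ) (B : Matrix (Fin nx) (Fin nw) ℝ)
    (Qx : Matrix (Fin nx) (Fin nx) ℝ) (Qxw : Matrix (Fin nx) (Fin nw) ℝ)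
    (Qw : Matrix (Fin nw) (Fin nw) ℝ)
    (P' : Matrix (Fin nx) (Fin nx) ℝ)
    (hQ : (Matrix.fromBlocks Qx Qxw Qxwᵀ Qw).PosSemidef)
    (hP' : P'.PosSemidef)
    (hG : (Qw + Bᵀ * P' * B).PosDef) :
    ((Qx + Aᵀ * P' * A)
      - (Qxw + Aᵀ * P' * B) * (Qw + Bᵀ * P' * B)⁻¹ * (Qxw + Aᵀ * P' * B)ᵀ).PosSemidef := by
  simp only [← conjTranspose_eq_transpose_of_trivial] at hQ hG ⊢
  exact hQ.sub_mul_inv_mul_conjTranspose_of_fromBlocks_add hP' A hG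
end

section
/- Block-diagonal cost identity under preliminary feedback: under the UFTOC setup with the preliminary (zero-terminal) Riccati recursion well defined, for every x̄_0 ∈ ℝ^{n_x} and every w̄_0,…,w̄_{N−1} ∈ ℝ^{n_w}, the trajectory defined by x_0 = x̄_0, w_t = k_{0,t+1} + K_{0,t+1} x_t + w̄_t and x_{t+1} = A_t x_t + B_t w_t + a_t satisfies Σ_{t=0}^{N−1}( ½ [x_t;w_t]ᵀ Q_t [x_t;w_t] + l_tᵀ [x_t;w_t] + c_t ) = ½ x̄_0ᵀ P_{0,0} x̄_0 − Ψ_{0,0}ᵀ x̄_0 + c̄_{0,0} + ½ Σ_{t=0}^{N−1} w̄_tᵀ G_{0,t+1} w̄_t; in particular, after the preliminary feedback, the Hessian of the stage-cost sum with respect to w̄ = (w̄_0;…;w̄_{N−1}) is the block-diagonal matrix Q̄ = blockdiag(G_{0,1},…,G_{0,N}), there is no cross term between x̄_0 and w̄, and no linear term in w̄. -/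
open Matrix Finset


lemma dvmT {m n : Type*} [Fintype m] [Fintype n] (M : Matrix n m ℝ) (v : m → ℝ) (u : n → ℝ) :
    v ⬝ᵥ (Mᵀ *ᵥ u) = (M *ᵥ v) ⬝ᵥ u := by
  rw [Matrix.dotProduct_mulVec, Matrix.vecMul_transpose]

lemma dvmTL {m n : Type*} [Fintype m] [Fintype n] (M : Matrix n m ℝ) (u : n → ℝ) (v : m → ℝ) :
    (Mᵀ *ᵥ u) ⬝ᵥ v = u ⬝ᵥ (M *ᵥ v) := by
  rw [dotProduct_comm, dvmT, dotProduct_comm]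

lemma symq {n : Type*} [Fintype n] {M : Matrix n n ℝ} (h : Mᵀ = M) (u v : n → ℝ) :
    u ⬝ᵥ (M *ᵥ v) = v ⬝ᵥ (M *ᵥ u) := by
  conv_lhs => rw [← h]
  rw [dvmT, dotProduct_comm]

lemma stage (nx nw : ℕ)
    (A : Matrix (Fin nx) (Fin nx) ℝ) (B : Matrix (Fin nx) (Fin nw) ℝ) (a : Fin nx → ℝ)
    (Qx : Matrix (Fin nx) (Fin nx) ℝ) (Qxw : Matrix (Fin nx) (Fin nw) ℝ)
    (Qw : Matrix (Fin nw) (Fin nw) ℝ)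
    (lx : Fin nx → ℝ) (lw : Fin nw → ℝ) (c : ℝ)
    (P' : Matrix (Fin nx) (Fin nx) ℝ) (Ψ' : Fin nx → ℝ) (cb' : ℝ)
    (G : Matrix (Fin nw) (Fin nw) ℝ) (K : Matrix (Fin nw) (Fin nx) ℝ) (k : Fin nw → ℝ)
    (P : Matrix (Fin nx) (Fin nx) ℝ) (Ψ : Fin nx → ℝ) (cb : ℝ)
    (hQx : Qxᵀ = Qx) (hQw : Qwᵀ = Qw) (hP's : P'ᵀ = P') (hGs : Gᵀ = G)
    (hGq : G = Qw + Bᵀ * P' * B)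
    (hGK : G * K = -(Qxw + Aᵀ * P' * B)ᵀ)
    (hGk : G *ᵥ k = Bᵀ *ᵥ Ψ' - lw - Bᵀ *ᵥ (P' *ᵥ a))
    (hP : P = Qx + Aᵀ * P' * A - Kᵀ * G * K)
    (hΨ : Ψ = Aᵀ *ᵥ Ψ' - (Qxw + Aᵀ * P' * B) *ᵥ k - lx - Aᵀ *ᵥ (P' *ᵥ a))
    (hcb : cb = cb' + (1/2) * (a ⬝ᵥ (P' *ᵥ a)) - Ψ' ⬝ᵥ a
            - (1/2) * (k ⬝ᵥ (G *ᵥ k)) + c)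
    (x : Fin nx → ℝ) (wb w : Fin nw → ℝ) (x' : Fin nx → ℝ)
    (hw : w = k + K *ᵥ x + wb)
    (hx' : x' = A *ᵥ x + B *ᵥ w + a) :
    (1/2) * (Sum.elim x w ⬝ᵥ (Matrix.fromBlocks Qx Qxw Qxwᵀ Qw *ᵥ Sum.elim x w))
      + Sum.elim lx lw ⬝ᵥ Sum.elim x w + c
      + ((1/2) * (x' ⬝ᵥ (P' *ᵥ x')) - Ψ' ⬝ᵥ x' + cb')
    = (1/2) * (x ⬝ᵥ (P *ᵥ x)) - Ψ ⬝ᵥ x + cb + (1/2) * (wb ⬝ᵥ (G *ᵥ wb)) := by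
  have hGq' : ∀ u v : Fin nw → ℝ, u ⬝ᵥ G *ᵥ v
      = u ⬝ᵥ Qw *ᵥ v + (B *ᵥ u) ⬝ᵥ P' *ᵥ B *ᵥ v := by
    intro u v
    rw [hGq]
    simp [Matrix.add_mulVec, ← Matrix.mulVec_mulVec, dotProduct_add, dvmT]
  have hGK' : ∀ u : Fin nw → ℝ, ∀ v : Fin nx → ℝ, u ⬝ᵥ G *ᵥ K *ᵥ v
      = -(v ⬝ᵥ Qxw *ᵥ u) - (B *ᵥ u) ⬝ᵥ P' *ᵥ A *ᵥ v := by
    intro u v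
    rw [Matrix.mulVec_mulVec, hGK]
    simp only [Matrix.neg_mulVec, Matrix.transpose_add, Matrix.transpose_mul,
      Matrix.transpose_transpose, hP's, Matrix.add_mulVec, ← Matrix.mulVec_mulVec,
      dotProduct_neg, dotProduct_add, dvmT]
    rw [dotProduct_comm (Qxw *ᵥ u) v]
    ring
  have hGk' : ∀ u : Fin nw → ℝ, u ⬝ᵥ G *ᵥ k
      = (B *ᵥ u) ⬝ᵥ Ψ' - u ⬝ᵥ lw - (B *ᵥ u) ⬝ᵥ P' *ᵥ a := by
    intro u
    rw [hGk]
    simp only [dotProduct_sub, ← Matrix.mulVec_mulVec, dvmT]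
  subst hx' hw hP hΨ hcb
  simp only [Matrix.fromBlocks_mulVec, Sum.elim_comp_inl, Sum.elim_comp_inr,
    sumElim_dotProduct_sumElim,
    ← Matrix.mulVec_mulVec, Matrix.transpose_mul, Matrix.transpose_transpose,
    Matrix.mulVec_add, Matrix.add_mulVec, Matrix.mulVec_sub, Matrix.sub_mulVec,
    Matrix.neg_mulVec, Matrix.mulVec_neg,
    dotProduct_add, add_dotProduct, dotProduct_sub,
    sub_dotProduct, neg_dotProduct, dotProduct_neg,
    hQx, hQw, hP's, hGs, dvmT, dvmTL]
  linarith [hGq' k k, hGq' wb wb, hGq' (K *ᵥ x) (K *ᵥ x), hGq' k (K *ᵥ x),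
    hGq' wb (K *ᵥ x), hGq' (K *ᵥ x) k, hGq' wb k, hGq' k wb, hGq' (K *ᵥ x) wb,
    hGq' wb (K *ᵥ x),
    hGK' k x, hGK' wb x, hGK' (K *ᵥ x) x,
    hGk' k, hGk' (K *ᵥ x), hGk' wb,
    symq hQw k (K *ᵥ x), symq hQw k wb, symq hQw (K *ᵥ x) wb,
    symq hP's (A *ᵥ x) (B *ᵥ k), symq hP's (A *ᵥ x) (B *ᵥ (K *ᵥ x)),
    symq hP's (A *ᵥ x) (B *ᵥ wb), symq hP's (A *ᵥ x) a,
    symq hP's (B *ᵥ k) (B *ᵥ (K *ᵥ x)), symq hP's (B *ᵥ k) (B *ᵥ wb),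
    symq hP's (B *ᵥ k) a, symq hP's (B *ᵥ (K *ᵥ x)) (B *ᵥ wb),
    symq hP's (B *ᵥ (K *ᵥ x)) a, symq hP's (B *ᵥ wb) a,
    dotProduct_comm (Qxw *ᵥ k) x, dotProduct_comm (Qxw *ᵥ (K *ᵥ x)) x,
    dotProduct_comm (Qxw *ᵥ wb) x,
    dotProduct_comm (P' *ᵥ (B *ᵥ k)) (A *ᵥ x),
    dotProduct_comm (P' *ᵥ a) (A *ᵥ x),
    dotProduct_comm (B *ᵥ k) Ψ', dotProduct_comm (B *ᵥ (K *ᵥ x)) Ψ',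
    dotProduct_comm (B *ᵥ wb) Ψ',
    dotProduct_comm lw k, dotProduct_comm lw (K *ᵥ x),
    dotProduct_comm lw wb]

/-- Block-diagonal cost identity under the preliminary feedback: the stage-cost sum
equals `½ x̄₀ᵀ P₀,₀ x̄₀ − Ψ₀,₀ᵀ x̄₀ + c̄₀,₀ + ½ Σ w̄ₜᵀ G₀,ₜ₊₁ w̄ₜ` — in particular, after
the preliminary feedback the Hessian with respect to `w̄` is `blockdiag(G₀,₁,…,G₀,N)`,
there is no cross term between `x̄₀` and `w̄`, and no linear term in `w̄`. -/
theorem block_diagonal_cost_identity_prelim_feedback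
    (nx nw N : ℕ) (hN : 1 ≤ N)
    (A : ℕ → Matrix (Fin nx) (Fin nx) ℝ)
    (B : ℕ → Matrix (Fin nx) (Fin nw) ℝ)
    (a : ℕ → Fin nx → ℝ)
    (Qx : ℕ → Matrix (Fin nx) (Fin nx) ℝ)
    (Qxw : ℕ → Matrix (Fin nx) (Fin nw) ℝ)
    (Qw : ℕ → Matrix (Fin nw) (Fin nw) ℝ)
    (lx : ℕ → Fin nx → ℝ) (lw : ℕ → Fin nw → ℝ) (c : ℕ → ℝ)
    (hQ : ∀ t < N, (Matrix.fromBlocks (Qx t) (Qxw t) (Qxw t)ᵀ (Qw t)).PosSemidef)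
    -- preliminary (zero-terminal) Riccati recursion quantities
    (P : ℕ → Matrix (Fin nx) (Fin nx) ℝ)
    (Ψ : ℕ → Fin nx → ℝ) (cb : ℕ → ℝ)
    (G : ℕ → Matrix (Fin nw) (Fin nw) ℝ)
    (K : ℕ → Matrix (Fin nw) (Fin nx) ℝ)
    (k : ℕ → Fin nw → ℝ)
    (hPN : P N = 0) (hΨN : Ψ N = 0) (hcbN : cb N = 0)
    (hGdef : ∀ t < N, G (t + 1) = Qw t + (B t)ᵀ * P (t + 1) * B t)
    (hGpd : ∀ t < N, (G (t + 1)).PosDef)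
    (hKdef : ∀ t < N,
      K (t + 1) = -((G (t + 1))⁻¹ * (Qxw t + (A t)ᵀ * P (t + 1) * B t)ᵀ))
    (hkdef : ∀ t < N,
      k (t + 1) = (G (t + 1))⁻¹ *ᵥ
        ((B t)ᵀ *ᵥ Ψ (t + 1) - lw t - (B t)ᵀ *ᵥ (P (t + 1) *ᵥ a t)))
    (hPdef : ∀ t < N,
      P t = Qx t + (A t)ᵀ * P (t + 1) * A t - (K (t + 1))ᵀ * G (t + 1) * K (t + 1))
    (hΨdef : ∀ t < N,
      Ψ t = (A t)ᵀ *ᵥ Ψ (t + 1) - (Qxw t + (A t)ᵀ * P (t + 1) * B t) *ᵥ k (t + 1)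
            - lx t - (A t)ᵀ *ᵥ (P (t + 1) *ᵥ a t))
    (hcbdef : ∀ t < N,
      cb t = cb (t + 1) + (1 / 2) * (a t ⬝ᵥ (P (t + 1) *ᵥ a t)) - Ψ (t + 1) ⬝ᵥ a t
             - (1 / 2) * (k (t + 1) ⬝ᵥ (G (t + 1) *ᵥ k (t + 1))) + c t)
    -- trajectory under preliminary feedback plus extra input w̄
    (xbar0 : Fin nx → ℝ)
    (wbar : ℕ → Fin nw → ℝ)
    (x : ℕ → Fin nx → ℝ) (w : ℕ → Fin nw → ℝ)
    (hx0 : x 0 = xbar0)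
    (hw : ∀ t < N, w t = k (t + 1) + K (t + 1) *ᵥ x t + wbar t)
    (hdyn : ∀ t < N, x (t + 1) = A t *ᵥ x t + B t *ᵥ w t + a t) :
    ∑ t ∈ Finset.range N,
        ((1 / 2) * (Sum.elim (x t) (w t) ⬝ᵥ
            (Matrix.fromBlocks (Qx t) (Qxw t) (Qxw t)ᵀ (Qw t) *ᵥ Sum.elim (x t) (w t)))
          + Sum.elim (lx t) (lw t) ⬝ᵥ Sum.elim (x t) (w t) + c t)
    = (1 / 2) * (xbar0 ⬝ᵥ (P 0 *ᵥ xbar0)) - Ψ 0 ⬝ᵥ xbar0 + cb 0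
      + (1 / 2) * ∑ t ∈ Finset.range N, (wbar t ⬝ᵥ (G (t + 1) *ᵥ wbar t)) := by
  -- symmetry of the cost blocks
  have hQsym : ∀ t < N,
      Matrix.fromBlocks (Qx t)ᵀ (Qxw t)ᵀᵀ (Qxw t)ᵀ (Qw t)ᵀ
        = Matrix.fromBlocks (Qx t) (Qxw t) (Qxw t)ᵀ (Qw t) := by
    intro t ht
    have h := (hQ t ht).isHermitian
    rwa [Matrix.IsHermitian, Matrix.conjTranspose_eq_transpose_of_trivial,
      Matrix.fromBlocks_transpose] at h
  have hQxs : ∀ t < N, (Qx t)ᵀ = Qx t := fun t ht =>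
    congrArg Matrix.toBlocks₁₁ (hQsym t ht)
  have hQws : ∀ t < N, (Qw t)ᵀ = Qw t := fun t ht =>
    congrArg Matrix.toBlocks₂₂ (hQsym t ht)
  -- invertibility facts
  have hGdet : ∀ t < N, IsUnit (G (t + 1)).det := fun t ht =>
    (hGpd t ht).det_pos.ne'.isUnit
  have hGKmat : ∀ t < N,
      G (t + 1) * K (t + 1) = -(Qxw t + (A t)ᵀ * P (t + 1) * B t)ᵀ := by
    intro t ht
    rw [hKdef t ht, Matrix.mul_neg, Matrix.mul_nonsing_inv_cancel_left _ _ (hGdet t ht)]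
  have hGkvec : ∀ t < N,
      G (t + 1) *ᵥ k (t + 1)
        = (B t)ᵀ *ᵥ Ψ (t + 1) - lw t - (B t)ᵀ *ᵥ (P (t + 1) *ᵥ a t) := by
    intro t ht
    rw [hkdef t ht, Matrix.mulVec_mulVec, Matrix.mul_nonsing_inv _ (hGdet t ht),
      Matrix.one_mulVec]
  -- symmetry of the Riccati matrices
  have hPsymAux : ∀ d t, t + d = N → (P t)ᵀ = P t := by
    intro d
    induction d with
    | zero =>
      intro t ht
      have : t = N := by omega
      subst this
      simp [hPN]
    | succ d ih =>
      intro t ht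
      have htN : t < N := by omega
      have hp' : (P (t + 1))ᵀ = P (t + 1) := ih (t + 1) (by omega)
      have hg : (G (t + 1))ᵀ = G (t + 1) := by
        rw [hGdef t htN]
        simp [Matrix.transpose_add, Matrix.transpose_mul, hp', hQws t htN,
          Matrix.mul_assoc]
      rw [hPdef t htN]
      simp [Matrix.transpose_sub, Matrix.transpose_add, Matrix.transpose_mul,
        hp', hg, hQxs t htN, Matrix.mul_assoc]
  have hPsym : ∀ t, t ≤ N → (P t)ᵀ = P t := fun t ht =>
    hPsymAux (N - t) t (by omega)
  have hGsym : ∀ t < N, (G (t + 1))ᵀ = G (t + 1) := by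
    intro t ht
    rw [hGdef t ht]
    simp [Matrix.transpose_add, Matrix.transpose_mul, hPsym (t + 1) (by omega),
      hQws t ht, Matrix.mul_assoc]
  -- the value function
  set V : ℕ → ℝ := fun t =>
    (1 / 2) * (x t ⬝ᵥ (P t *ᵥ x t)) - Ψ t ⬝ᵥ x t + cb t with hV
  have hstage : ∀ t ∈ Finset.range N,
      (1 / 2) * (Sum.elim (x t) (w t) ⬝ᵥ
          (Matrix.fromBlocks (Qx t) (Qxw t) (Qxw t)ᵀ (Qw t) *ᵥ Sum.elim (x t) (w t)))
        + Sum.elim (lx t) (lw t) ⬝ᵥ Sum.elim (x t) (w t) + c t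
      = (V t - V (t + 1)) + (1 / 2) * (wbar t ⬝ᵥ (G (t + 1) *ᵥ wbar t)) := by
    intro t ht'
    have ht : t < N := Finset.mem_range.mp ht'
    have := stage nx nw (A t) (B t) (a t) (Qx t) (Qxw t) (Qw t) (lx t) (lw t) (c t)
      (P (t + 1)) (Ψ (t + 1)) (cb (t + 1)) (G (t + 1)) (K (t + 1)) (k (t + 1))
      (P t) (Ψ t) (cb t)
      (hQxs t ht) (hQws t ht) (hPsym (t + 1) (by omega)) (hGsym t ht)
      (hGdef t ht) (hGKmat t ht) (hGkvec t ht) (hPdef t ht) (hΨdef t ht)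
      (hcbdef t ht) (x t) (wbar t) (w t) (x (t + 1)) (hw t ht) (hdyn t ht)
    simp only [hV]
    linarith [this]
  rw [Finset.sum_congr rfl hstage, Finset.sum_add_distrib, Finset.sum_range_sub' V,
    Finset.mul_sum, ← Finset.mul_sum]
  have hVN : V N = 0 := by
    simp [hV, hPN, hΨN, hcbN, Matrix.zero_mulVec]
  have hV0 : V 0 = (1 / 2) * (xbar0 ⬝ᵥ (P 0 *ᵥ xbar0)) - Ψ 0 ⬝ᵥ xbar0 + cb 0 := by
    simp [hV, hx0]
  rw [hVN, hV0]
  ring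
end

section
/- Equivalence of the full and reduced feedback equations via an orthonormal range basis: let Q̄ ∈ ℝ^{q×q} be symmetric positive definite, S ∈ ℝ^{n×q}, P̂ ∈ ℝ^{n×n} symmetric positive semidefinite, Â ∈ ℝ^{n×n}, and let U₁ ∈ ℝ^{q×r} have orthonormal columns (U₁ᵀU₁ = I_r) whose column space equals the column space of Sᵀ. Then a matrix K̂ ∈ ℝ^{r×n} satisfies (U₁ᵀQ̄⁻¹U₁ + U₁ᵀQ̄⁻¹SᵀP̂SQ̄⁻¹U₁) K̂ = −U₁ᵀQ̄⁻¹SᵀP̂Â if and only if K̄ := Q̄⁻¹U₁K̂ satisfies (Q̄ + SᵀP̂S) K̄ = −SᵀP̂Â. -/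
/-!
Write `X := (Q̄ + SᵀP̂S) Q̄⁻¹U₁K̂ + SᵀP̂Â` for the residual of the full equation. The residual of the
reduced equation is `U₁ᵀQ̄⁻¹X`. Since the columns of `Sᵀ` lie in the column space of `U₁`,
`Sᵀ = U₁D` for some `D`, and then `X = U₁C` for an explicit `C`. Hence `U₁ᵀQ̄⁻¹X = 0` gives
`XᵀQ̄⁻¹X = CᵀU₁ᵀQ̄⁻¹X = 0`, which forces `X = 0` because `Q̄⁻¹` is positive definite.
-/

open Matrix

namespace Matrix

variable {m n k l R : Type*}

theorem exists_eq_mul_of_span_range_col_le [Fintype k] [CommSemiring R]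
    {A : Matrix m k R} {B : Matrix m l R}
    (h : Submodule.span R (Set.range B.col) ≤ Submodule.span R (Set.range A.col)) :
    ∃ D : Matrix k l R, B = A * D := by
  have hcol (j : l) : ∃ d, A *ᵥ d = B.col j := by
    change B.col j ∈ LinearMap.range A.mulVecLin
    rw [range_mulVecLin]
    exact h (Submodule.subset_span ⟨j, rfl⟩)
  choose d hd using hcol
  refine ⟨(of d)ᵀ, ext fun i j => ?_⟩
  rw [← col_apply B j i, ← hd]
  rfl

theorem PosDef.eq_zero_of_conjTranspose_mul_mul_self_eq_zero [Fintype n] [CommRing R]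
    [PartialOrder R] [StarRing R] {M : Matrix n n R} (hM : M.PosDef) {A : Matrix n m R}
    (h : Aᴴ * M * A = 0) : A = 0 := by
  ext i j
  by_contra hij
  have hAj : A.col j ≠ 0 := fun h0 => hij (congrFun h0 i)
  have hpos := hM.dotProduct_mulVec_pos hAj
  have hjj : star (A.col j) ⬝ᵥ M *ᵥ A.col j = (Aᴴ * M * A) j j := by
    simp only [dotProduct, Pi.star_apply, col_apply, mulVec, Finset.mul_sum, mul_apply,
      conjTranspose_apply, Finset.sum_mul, mul_assoc]
    exact Finset.sum_comm
  rw [hjj, h] at hpos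
  exact hpos.false

theorem PosDef.conjTranspose_mul_mul_mul_eq_zero_iff [Fintype n] [Fintype k] [CommRing R]
    [PartialOrder R] [StarRing R] {M : Matrix n n R} (hM : M.PosDef) (U : Matrix n k R)
    (C : Matrix k m R) : Uᴴ * M * (U * C) = 0 ↔ U * C = 0 := by
  refine ⟨fun h => hM.eq_zero_of_conjTranspose_mul_mul_self_eq_zero ?_, fun h => by
    rw [h, Matrix.mul_zero]⟩
  simp only [conjTranspose_mul, Matrix.mul_assoc] at h ⊢
  rw [h, Matrix.mul_zero]

end Matrix

theorem full_reduced_feedback_equiv_general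
    (n q r : ℕ)
    (Qbar : Matrix (Fin q) (Fin q) ℝ) (hQbar : Qbar.PosDef)
    (S : Matrix (Fin n) (Fin q) ℝ)
    (Ph : Matrix (Fin n) (Fin n) ℝ)
    (Ah : Matrix (Fin n) (Fin n) ℝ)
    (U₁ : Matrix (Fin q) (Fin r) ℝ)
    (hrange : Submodule.span ℝ (Set.range U₁ᵀ) = Submodule.span ℝ (Set.range S))
    (Kh : Matrix (Fin r) (Fin n) ℝ) :
    (U₁ᵀ * Qbar⁻¹ * U₁ + U₁ᵀ * Qbar⁻¹ * Sᵀ * Ph * S * Qbar⁻¹ * U₁) * Kh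
        = -(U₁ᵀ * Qbar⁻¹ * Sᵀ * Ph * Ah)
      ↔ (Qbar + Sᵀ * Ph * S) * (Qbar⁻¹ * U₁ * Kh) = -(Sᵀ * Ph * Ah) := by
  obtain ⟨D, hD⟩ : ∃ D, Sᵀ = U₁ * D := exists_eq_mul_of_span_range_col_le hrange.ge
  have hQQinv : Qbar * Qbar⁻¹ = 1 := mul_nonsing_inv _ hQbar.det_pos.ne'.isUnit
  have hQinvQ : Qbar⁻¹ * Qbar = 1 := nonsing_inv_mul _ hQbar.det_pos.ne'.isUnit
  rw [eq_neg_iff_add_eq_zero, eq_neg_iff_add_eq_zero]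
  set X := (Qbar + Sᵀ * Ph * S) * (Qbar⁻¹ * U₁ * Kh) + Sᵀ * Ph * Ah
  have hreduced : (U₁ᵀ * Qbar⁻¹ * U₁ + U₁ᵀ * Qbar⁻¹ * Sᵀ * Ph * S * Qbar⁻¹ * U₁) * Kh
      + U₁ᵀ * Qbar⁻¹ * Sᵀ * Ph * Ah = U₁ᴴ * Qbar⁻¹ * X := by
    simp only [X, conjTranspose_eq_transpose_of_trivial, Matrix.mul_add, Matrix.add_mul,
      Matrix.mul_assoc, ← Matrix.mul_assoc Qbar⁻¹ Qbar, hQinvQ, Matrix.one_mul]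
  have hfactor : X = U₁ * (Kh + D * (Ph * S * (Qbar⁻¹ * U₁ * Kh) + Ph * Ah)) := by
    simp only [X, hD, Matrix.mul_add, Matrix.add_mul, Matrix.mul_assoc,
      ← Matrix.mul_assoc Qbar Qbar⁻¹, hQQinv, Matrix.one_mul]
    abel
  rw [hreduced, hfactor, hQbar.inv.conjTranspose_mul_mul_mul_eq_zero_iff]

/-- Equivalence of the full and reduced feedback equations via an orthonormal basis
`U₁` of the column space of `Sᵀ`. -/
theorem full_reduced_feedback_equiv
    (n q r : ℕ)
    (Qbar : Matrix (Fin q) (Fin q) ℝ) (hQbar : Qbar.PosDef)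
    (S : Matrix (Fin n) (Fin q) ℝ)
    (Ph : Matrix (Fin n) (Fin n) ℝ) (hPh : Ph.PosSemidef)
    (Ah : Matrix (Fin n) (Fin n) ℝ)
    (U₁ : Matrix (Fin q) (Fin r) ℝ)
    (hU₁ : U₁ᵀ * U₁ = 1)
    (hrange : Submodule.span ℝ (Set.range U₁ᵀ) = Submodule.span ℝ (Set.range S))
    (Kh : Matrix (Fin r) (Fin n) ℝ) :
    (U₁ᵀ * Qbar⁻¹ * U₁ + U₁ᵀ * Qbar⁻¹ * Sᵀ * Ph * S * Qbar⁻¹ * U₁) * Kh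
        = -(U₁ᵀ * Qbar⁻¹ * Sᵀ * Ph * Ah)
      ↔ (Qbar + Sᵀ * Ph * S) * (Qbar⁻¹ * U₁ * Kh) = -(Sᵀ * Ph * Ah) :=
  full_reduced_feedback_equiv_general n q r Qbar hQbar S Ph Ah U₁ hrange Kh
end

section
/- Equivalence of the full and reduced feedforward equations via an orthonormal range basis: let Q̄ ∈ ℝ^{q×q} be symmetric positive definite, S ∈ ℝ^{n×q}, P̂ ∈ ℝ^{n×n} symmetric positive semidefinite, Ψ̂, â ∈ ℝ^n, and let U₁ ∈ ℝ^{q×r} have orthonormal columns (U₁ᵀU₁ = I_r) whose column space equals the column space of Sᵀ. Define B̂ = SQ̄⁻¹U₁ and Ĝ = U₁ᵀQ̄⁻¹U₁ + B̂ᵀP̂B̂. Then a vector k̂ ∈ ℝ^r satisfies Ĝ k̂ = B̂ᵀ(Ψ̂ − P̂â) if and only if k̄ := Q̄⁻¹U₁k̂ satisfies (Q̄ + SᵀP̂S) k̄ = Sᵀ(Ψ̂ − P̂â). -/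
/-!
Both sides of the full equation, `(Q̄ + SᵀP̂S) Q̄⁻¹U₁k̂ = U₁k̂ + SᵀP̂B̂k̂` and `Sᵀ(Ψ̂ − P̂â)`,
lie in the column space of `Sᵀ`, which is that of `U₁`. The reduced equation is the full one multiplied by
`U₁ᵀQ̄⁻¹`, and this multiplication is injective on the column space of `U₁` because `Q̄⁻¹` is
positive definite: if `x = U₁y` and `U₁ᵀQ̄⁻¹x = 0` then `xᵀQ̄⁻¹x = yᵀU₁ᵀQ̄⁻¹x = 0`.
-/

open Matrix

namespace Matrix

variable {m k R : Type*} [Fintype m] [Fintype k] [CommRing R] [PartialOrder R] [StarRing R]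

theorem PosDef.eq_zero_of_conjTranspose_mulVec_mulVec_eq_zero {A : Matrix m m R} (hA : A.PosDef)
    {V : Matrix m k R} {x : m → R} (hx : x ∈ LinearMap.range V.mulVecLin)
    (h : Vᴴ *ᵥ (A *ᵥ x) = 0) : x = 0 := by
  obtain ⟨y, rfl⟩ := hx
  rw [mulVecLin_apply] at h ⊢
  by_contra hne
  have hquad : star (V *ᵥ y) ⬝ᵥ A *ᵥ (V *ᵥ y) = 0 := by
    rw [star_mulVec, ← dotProduct_mulVec, h, dotProduct_zero]
  exact (hA.dotProduct_mulVec_pos hne).ne' hquad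

theorem PosDef.conjTranspose_mulVec_mulVec_inj_of_mem_range {A : Matrix m m R} (hA : A.PosDef)
    {V : Matrix m k R} {u v : m → R} (hu : u ∈ LinearMap.range V.mulVecLin)
    (hv : v ∈ LinearMap.range V.mulVecLin) :
    Vᴴ *ᵥ (A *ᵥ u) = Vᴴ *ᵥ (A *ᵥ v) ↔ u = v := by
  refine ⟨fun h => sub_eq_zero.mp ?_, fun h => h ▸ rfl⟩
  refine hA.eq_zero_of_conjTranspose_mulVec_mulVec_eq_zero (Submodule.sub_mem _ hu hv) ?_
  rw [mulVec_sub, mulVec_sub, h, sub_self]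

end Matrix

theorem full_reduced_feedforward_equiv_general
    (n q r : ℕ)
    (Qbar : Matrix (Fin q) (Fin q) ℝ) (hQbar : Qbar.PosDef)
    (S : Matrix (Fin n) (Fin q) ℝ)
    (Ph : Matrix (Fin n) (Fin n) ℝ)
    (Ψh ah : Fin n → ℝ)
    (U₁ : Matrix (Fin q) (Fin r) ℝ)
    (hrange : Submodule.span ℝ (Set.range U₁ᵀ) = Submodule.span ℝ (Set.range S))
    (Bh : Matrix (Fin n) (Fin r) ℝ) (hBh : Bh = S * Qbar⁻¹ * U₁)
    (Gh : Matrix (Fin r) (Fin r) ℝ) (hGh : Gh = U₁ᵀ * Qbar⁻¹ * U₁ + Bhᵀ * Ph * Bh)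
    (kh : Fin r → ℝ) :
    Gh *ᵥ kh = Bhᵀ *ᵥ (Ψh - Ph *ᵥ ah)
      ↔ (Qbar + Sᵀ * Ph * S) *ᵥ (Qbar⁻¹ *ᵥ (U₁ *ᵥ kh)) = Sᵀ *ᵥ (Ψh - Ph *ᵥ ah) := by
  set w := Ψh - Ph *ᵥ ah
  have hcols : LinearMap.range U₁.mulVecLin = LinearMap.range Sᵀ.mulVecLin := by
    rw [range_mulVecLin, range_mulVecLin]
    exact hrange
  have hBh_transpose : Bhᵀ = U₁ᵀ * Qbar⁻¹ * Sᵀ := by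
    rw [hBh, transpose_mul, transpose_mul, transpose_nonsing_inv,
      ← conjTranspose_eq_transpose_of_trivial Qbar, hQbar.isHermitian.eq, Matrix.mul_assoc]
  have hfull : (Qbar + Sᵀ * Ph * S) *ᵥ (Qbar⁻¹ *ᵥ (U₁ *ᵥ kh))
      = U₁ *ᵥ kh + Sᵀ *ᵥ (Ph *ᵥ (Bh *ᵥ kh)) := by
    rw [hBh, add_mulVec, mulVec_mulVec (M := Qbar),
      mul_nonsing_inv _ ((isUnit_iff_isUnit_det _).mp hQbar.isUnit), one_mulVec]
    simp only [mulVec_mulVec, Matrix.mul_assoc]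
  have hreduced : Gh *ᵥ kh = U₁ᵀ *ᵥ (Qbar⁻¹ *ᵥ (U₁ *ᵥ kh + Sᵀ *ᵥ (Ph *ᵥ (Bh *ᵥ kh)))) := by
    rw [hGh, hBh_transpose]
    simp only [add_mulVec, mulVec_add, mulVec_mulVec, Matrix.mul_assoc]
  have hrhs : Bhᵀ *ᵥ w = U₁ᵀ *ᵥ (Qbar⁻¹ *ᵥ (Sᵀ *ᵥ w)) := by
    rw [hBh_transpose]
    simp only [mulVec_mulVec, Matrix.mul_assoc]
  rw [hreduced, hrhs, hfull, ← conjTranspose_eq_transpose_of_trivial]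
  refine hQbar.inv.conjTranspose_mulVec_mulVec_inj_of_mem_range ?_ ?_
  · refine Submodule.add_mem _ ⟨kh, rfl⟩ ?_
    rw [hcols]
    exact ⟨_, rfl⟩
  · rw [hcols]
    exact ⟨w, rfl⟩

/-- Equivalence of the full and reduced feedforward equations via an orthonormal basis
`U₁` of the column space of `Sᵀ`, with `B̂ = SQ̄⁻¹U₁` and `Ĝ = U₁ᵀQ̄⁻¹U₁ + B̂ᵀP̂B̂`. -/
theorem full_reduced_feedforward_equiv
    (n q r : ℕ)
    (Qbar : Matrix (Fin q) (Fin q) ℝ) (hQbar : Qbar.PosDef)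
    (S : Matrix (Fin n) (Fin q) ℝ)
    (Ph : Matrix (Fin n) (Fin n) ℝ) (hPh : Ph.PosSemidef)
    (Ψh ah : Fin n → ℝ)
    (U₁ : Matrix (Fin q) (Fin r) ℝ)
    (hU₁ : U₁ᵀ * U₁ = 1)
    (hrange : Submodule.span ℝ (Set.range U₁ᵀ) = Submodule.span ℝ (Set.range S))
    (Bh : Matrix (Fin n) (Fin r) ℝ) (hBh : Bh = S * Qbar⁻¹ * U₁)
    (Gh : Matrix (Fin r) (Fin r) ℝ) (hGh : Gh = U₁ᵀ * Qbar⁻¹ * U₁ + Bhᵀ * Ph * Bh)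
    (kh : Fin r → ℝ) :
    Gh *ᵥ kh = Bhᵀ *ᵥ (Ψh - Ph *ᵥ ah)
      ↔ (Qbar + Sᵀ * Ph * S) *ᵥ (Qbar⁻¹ *ᵥ (U₁ *ᵥ kh)) = Sᵀ *ᵥ (Ψh - Ph *ᵥ ah) :=
  full_reduced_feedforward_equiv_general n q r Qbar hQbar S Ph Ψh ah U₁ hrange Bh hBh Gh hGh kh
end

section
/- Basis-free transformation of the reduced feedback equation (equation (23)): let Q̄ ∈ ℝ^{q×q} be symmetric positive definite, S ∈ ℝ^{n×q}, P̂ ∈ ℝ^{n×n} symmetric positive semidefinite, and Â ∈ ℝ^{n×n}. Then a matrix L̂ ∈ ℝ^{n×n} satisfies (SQ̄⁻¹Sᵀ + SQ̄⁻¹Sᵀ P̂ SQ̄⁻¹Sᵀ) L̂ = −SQ̄⁻¹Sᵀ P̂ Â if and only if K̄ := Q̄⁻¹Sᵀ L̂ satisfies (Q̄ + SᵀP̂S) K̄ = −SᵀP̂Â. -/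
/-!
Both equations say that the same matrix `Y = L̂ + P̂SQ̄⁻¹SᵀL̂ + P̂Â` is annihilated: the reduced
one by `SQ̄⁻¹Sᵀ`, the full one by `Sᵀ` (expand and use `Q̄Q̄⁻¹ = 1`). These are equivalent because
`Q̄⁻¹` is positive definite: `SQ̄⁻¹SᵀY = 0` gives `(SᵀY)ᵀQ̄⁻¹(SᵀY) = 0`, hence `SᵀY = 0`.
-/

open Matrix

namespace Matrix.PosDef

variable {m n p R : Type*} [Fintype m] [Fintype n] [Fintype p]
  [Ring R] [PartialOrder R] [StarRing R]

theorem conjTranspose_mul_mul_same_eq_zero_iff {A : Matrix n n R} (hA : A.PosDef)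
    {B : Matrix n m R} : Bᴴ * A * B = 0 ↔ B = 0 := by
  refine ⟨fun h => ext_iff_mulVec.2 fun v => ?_, fun h => by simp [h]⟩
  rw [zero_mulVec]
  by_contra hBv
  have hpos := hA.dotProduct_mulVec_pos hBv
  rw [star_mulVec, ← dotProduct_mulVec, mulVec_mulVec, mulVec_mulVec, h, zero_mulVec,
    dotProduct_zero] at hpos
  exact hpos.false

theorem mul_mul_conjTranspose_same_mul_eq_zero_iff {A : Matrix m m R} (hA : A.PosDef)
    (B : Matrix n m R) (C : Matrix n p R) : B * A * Bᴴ * C = 0 ↔ Bᴴ * C = 0 := by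
  refine ⟨fun h => ?_, fun h => by rw [Matrix.mul_assoc, h, Matrix.mul_zero]⟩
  rw [← hA.conjTranspose_mul_mul_same_eq_zero_iff]
  simpa [Matrix.mul_assoc, conjTranspose_mul] using congr(Cᴴ * $h)

end Matrix.PosDef

theorem basis_free_feedback_equiv_general
    (n q : ℕ)
    (Qbar : Matrix (Fin q) (Fin q) ℝ) (hQbar : Qbar.PosDef)
    (S : Matrix (Fin n) (Fin q) ℝ)
    (Ph : Matrix (Fin n) (Fin n) ℝ)
    (Ah : Matrix (Fin n) (Fin n) ℝ)
    (Lh : Matrix (Fin n) (Fin n) ℝ) :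
    (S * Qbar⁻¹ * Sᵀ + S * Qbar⁻¹ * Sᵀ * Ph * (S * Qbar⁻¹ * Sᵀ)) * Lh
        = -(S * Qbar⁻¹ * Sᵀ * Ph * Ah)
      ↔ (Qbar + Sᵀ * Ph * S) * (Qbar⁻¹ * Sᵀ * Lh) = -(Sᵀ * Ph * Ah) := by
  have hQ : Qbar * Qbar⁻¹ = 1 := mul_nonsing_inv _ ((isUnit_iff_isUnit_det _).1 hQbar.isUnit)
  set Y := Lh + Ph * S * Qbar⁻¹ * Sᵀ * Lh + Ph * Ah
  have hreduced : (S * Qbar⁻¹ * Sᵀ + S * Qbar⁻¹ * Sᵀ * Ph * (S * Qbar⁻¹ * Sᵀ)) * Lh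
      + S * Qbar⁻¹ * Sᵀ * Ph * Ah = S * Qbar⁻¹ * Sᵀ * Y := by
    simp only [Y, Matrix.mul_add, Matrix.add_mul, Matrix.mul_assoc]
  have hfull : (Qbar + Sᵀ * Ph * S) * (Qbar⁻¹ * Sᵀ * Lh) + Sᵀ * Ph * Ah = Sᵀ * Y := by
    simp only [Y, Matrix.mul_add, Matrix.add_mul, Matrix.mul_assoc, ← Matrix.mul_assoc Qbar, hQ,
      Matrix.one_mul]
  rw [eq_neg_iff_add_eq_zero, hreduced, eq_neg_iff_add_eq_zero, hfull,
    ← conjTranspose_eq_transpose_of_trivial]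
  exact hQbar.inv.mul_mul_conjTranspose_same_mul_eq_zero_iff S Y

/-- Basis-free transformation of the reduced feedback equation (equation (23)):
`L̂` solves the transformed equation iff `K̄ = Q̄⁻¹Sᵀ L̂` solves the full equation. -/
theorem basis_free_feedback_equiv
    (n q : ℕ)
    (Qbar : Matrix (Fin q) (Fin q) ℝ) (hQbar : Qbar.PosDef)
    (S : Matrix (Fin n) (Fin q) ℝ)
    (Ph : Matrix (Fin n) (Fin n) ℝ) (hPh : Ph.PosSemidef)
    (Ah : Matrix (Fin n) (Fin n) ℝ)
    (Lh : Matrix (Fin n) (Fin n) ℝ) :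
    (S * Qbar⁻¹ * Sᵀ + S * Qbar⁻¹ * Sᵀ * Ph * (S * Qbar⁻¹ * Sᵀ)) * Lh
        = -(S * Qbar⁻¹ * Sᵀ * Ph * Ah)
      ↔ (Qbar + Sᵀ * Ph * S) * (Qbar⁻¹ * Sᵀ * Lh) = -(Sᵀ * Ph * Ah) :=
  basis_free_feedback_equiv_general n q Qbar hQbar S Ph Ah Lh
end

section
/- Correctness of the dual variables produced by the Riccati forward recursion: under the UFTOC setup with G_{t+1} positive definite for all t, let (x*, w*) be the trajectory with x*_0 = x̄_0, w*_t = k_{t+1} + K_{t+1} x*_t, x*_{t+1} = A_t x*_t + B_t w*_t + a_t, and define λ_t = P_t x*_t − Ψ_t for t = 0,…,N. Then the KKT stationarity conditions of the equality-constrained quadratic program hold: λ_N = Q_{x,N} x*_N + l_N; for each t = 0,…,N−1, λ_t = Q_{x,t} x*_t + Q_{xw,t} w*_t + l_{x,t} + A_tᵀ λ_{t+1} and 0 = Q_{xw,t}ᵀ x*_t + Q_{w,t} w*_t + l_{w,t} + B_tᵀ λ_{t+1}. -/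
open Matrix

/-- Correctness of the dual variables produced by the Riccati forward recursion:
`λ_t = P_t x*_t − Ψ_t` satisfies the KKT stationarity conditions. -/
theorem riccati_dual_variables_kkt
    (nx nw N : ℕ) (hN : 1 ≤ N)
    (A : ℕ → Matrix (Fin nx) (Fin nx) ℝ)
    (B : ℕ → Matrix (Fin nx) (Fin nw) ℝ)
    (a : ℕ → Fin nx → ℝ)
    (Qx : ℕ → Matrix (Fin nx) (Fin nx) ℝ)
    (Qxw : ℕ → Matrix (Fin nx) (Fin nw) ℝ)
    (Qw : ℕ → Matrix (Fin nw) (Fin nw) ℝ)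
    (lx : ℕ → Fin nx → ℝ) (lw : ℕ → Fin nw → ℝ) (c : ℕ → ℝ)
    (hQ : ∀ t < N, (Matrix.fromBlocks (Qx t) (Qxw t) (Qxw t)ᵀ (Qw t)).PosSemidef)
    (QxN : Matrix (Fin nx) (Fin nx) ℝ) (lN : Fin nx → ℝ) (cN : ℝ)
    (hQN : QxN.PosSemidef)
    -- Riccati recursion quantities
    (P : ℕ → Matrix (Fin nx) (Fin nx) ℝ)
    (Ψ : ℕ → Fin nx → ℝ) (cb : ℕ → ℝ)
    (G : ℕ → Matrix (Fin nw) (Fin nw) ℝ)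
    (K : ℕ → Matrix (Fin nw) (Fin nx) ℝ)
    (k : ℕ → Fin nw → ℝ)
    (hPN : P N = QxN) (hΨN : Ψ N = -lN) (hcbN : cb N = cN)
    (hGdef : ∀ t < N, G (t + 1) = Qw t + (B t)ᵀ * P (t + 1) * B t)
    (hGpd : ∀ t < N, (G (t + 1)).PosDef)
    (hKdef : ∀ t < N,
      K (t + 1) = -((G (t + 1))⁻¹ * (Qxw t + (A t)ᵀ * P (t + 1) * B t)ᵀ))
    (hkdef : ∀ t < N,
      k (t + 1) = (G (t + 1))⁻¹ *ᵥ
        ((B t)ᵀ *ᵥ Ψ (t + 1) - lw t - (B t)ᵀ *ᵥ (P (t + 1) *ᵥ a t)))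
    (hPdef : ∀ t < N,
      P t = Qx t + (A t)ᵀ * P (t + 1) * A t - (K (t + 1))ᵀ * G (t + 1) * K (t + 1))
    (hΨdef : ∀ t < N,
      Ψ t = (A t)ᵀ *ᵥ Ψ (t + 1) - (Qxw t + (A t)ᵀ * P (t + 1) * B t) *ᵥ k (t + 1)
            - lx t - (A t)ᵀ *ᵥ (P (t + 1) *ᵥ a t))
    (hcbdef : ∀ t < N,
      cb t = cb (t + 1) + (1 / 2) * (a t ⬝ᵥ (P (t + 1) *ᵥ a t)) - Ψ (t + 1) ⬝ᵥ a t
             - (1 / 2) * (k (t + 1) ⬝ᵥ (G (t + 1) *ᵥ k (t + 1))) + c t)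
    -- the optimal trajectory and the dual variables
    (xbar0 : Fin nx → ℝ)
    (xs : ℕ → Fin nx → ℝ) (ws : ℕ → Fin nw → ℝ) (lam : ℕ → Fin nx → ℝ)
    (hxs0 : xs 0 = xbar0)
    (hws : ∀ t < N, ws t = k (t + 1) + K (t + 1) *ᵥ xs t)
    (hxsdyn : ∀ t < N, xs (t + 1) = A t *ᵥ xs t + B t *ᵥ ws t + a t)
    (hlam : ∀ t ≤ N, lam t = P t *ᵥ xs t - Ψ t) :
    lam N = QxN *ᵥ xs N + lN
    ∧ (∀ t < N,
        lam t = Qx t *ᵥ xs t + Qxw t *ᵥ ws t + lx t + (A t)ᵀ *ᵥ lam (t + 1)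
        ∧ 0 = (Qxw t)ᵀ *ᵥ xs t + Qw t *ᵥ ws t + lw t + (B t)ᵀ *ᵥ lam (t + 1)) := by
  
  -- symmetry of Qx
  have hQxsym : ∀ t < N, (Qx t)ᵀ = Qx t := by
    intro t ht
    have he := (hQ t ht).1.eq
    ext i j
    have := congrFun (congrFun he (Sum.inl i)) (Sum.inl j)
    simpa [Matrix.fromBlocks, Matrix.conjTranspose_apply] using this
  -- symmetry of P, by downward induction
  have hPkey : ∀ s : ℕ, (P (N - s))ᵀ = P (N - s) := by
    intro s
    induction s with
    | zero => simpa [hPN] using hQN.1.eq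
    | succ s ih =>
      rcases le_or_gt N s with h | h
      · rw [Nat.sub_eq_zero_of_le (le_trans h (Nat.le_succ s))]
        rwa [Nat.sub_eq_zero_of_le h] at ih
      · have ht' : N - (s + 1) < N := by omega
        have hsucc : N - (s + 1) + 1 = N - s := by omega
        have ih' : (P (N - (s + 1) + 1))ᵀ = P (N - (s + 1) + 1) := by rw [hsucc]; exact ih
        have hGsym : (G (N - (s + 1) + 1))ᵀ = G (N - (s + 1) + 1) :=
          (hGpd _ ht').1.eq
        rw [hPdef _ ht']
        simp only [Matrix.transpose_sub, Matrix.transpose_add, Matrix.transpose_mul,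
          Matrix.transpose_transpose, hQxsym _ ht', ih', hGsym, Matrix.mul_assoc]
  have hPsym : ∀ t ≤ N, (P t)ᵀ = P t := by
    intro t htN
    have : t = N - (N - t) := by omega
    rw [this]; exact hPkey (N - t)
  constructor
  · rw [hlam N le_rfl, hPN, hΨN, sub_neg_eq_add]
  · intro t ht
    have ht1 : t + 1 ≤ N := ht
    have hGG : G (t + 1) * (G (t + 1))⁻¹ = 1 :=
      Matrix.mul_nonsing_inv _ (isUnit_iff_ne_zero.mpr (ne_of_gt (hGpd t ht).det_pos))
    have hGsym : (G (t + 1))ᵀ = G (t + 1) := (hGpd t ht).1.eq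
    set H : Matrix (Fin nx) (Fin nw) ℝ := Qxw t + (A t)ᵀ * P (t + 1) * B t with hH
    have hGK : G (t + 1) * K (t + 1) = -Hᵀ := by
      rw [hKdef t ht, Matrix.mul_neg, ← Matrix.mul_assoc, hGG, Matrix.one_mul]
    have hKtG : (K (t + 1))ᵀ * G (t + 1) = -H := by
      have h2 := congrArg Matrix.transpose hGK
      rw [Matrix.transpose_mul, hGsym, Matrix.transpose_neg, Matrix.transpose_transpose] at h2
      exact h2
    have hGk : G (t + 1) *ᵥ k (t + 1)
        = (B t)ᵀ *ᵥ Ψ (t + 1) - lw t - (B t)ᵀ *ᵥ (P (t + 1) *ᵥ a t) := by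
      rw [hkdef t ht, Matrix.mulVec_mulVec, hGG, Matrix.one_mulVec]
    have hKGK : (K (t + 1))ᵀ * G (t + 1) * K (t + 1) = -(H * K (t + 1)) := by
      rw [hKtG, Matrix.neg_mul]
    have hHT : Hᵀ = (Qxw t)ᵀ + (B t)ᵀ * P (t + 1) * A t := by
      simp only [hH, Matrix.transpose_add, Matrix.transpose_mul, Matrix.transpose_transpose,
        hPsym (t + 1) ht1, Matrix.mul_assoc]
    constructor
    · rw [hlam t (le_of_lt ht), hlam (t + 1) ht1, hPdef t ht, hΨdef t ht, hKGK,
        hxsdyn t ht, hws t ht]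
      simp only [Matrix.mulVec_add, Matrix.mulVec_sub, Matrix.add_mulVec, Matrix.sub_mulVec,
        Matrix.neg_mulVec, Matrix.mulVec_mulVec, Matrix.mulVec_neg, hH,
        Matrix.mul_add, Matrix.add_mul, Matrix.mul_assoc]
      abel
    · have hQweq : Qw t = G (t + 1) - (B t)ᵀ * P (t + 1) * B t := by
        rw [hGdef t ht]; exact (add_sub_cancel_right _ _).symm
      have hGws : G (t + 1) *ᵥ ws t
          = ((B t)ᵀ *ᵥ Ψ (t + 1) - lw t - (B t)ᵀ *ᵥ (P (t + 1) *ᵥ a t))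
            - ((Qxw t)ᵀ + (B t)ᵀ * P (t + 1) * A t) *ᵥ xs t := by
        have hGKx : G (t + 1) *ᵥ (K (t + 1) *ᵥ xs t)
            = -(((Qxw t)ᵀ + (B t)ᵀ * P (t + 1) * A t) *ᵥ xs t) := by
          rw [Matrix.mulVec_mulVec, hGK, hHT, Matrix.neg_mulVec]
        rw [hws t ht, Matrix.mulVec_add, hGk, hGKx, ← sub_eq_add_neg]
      have hQwws : Qw t *ᵥ ws t
          = G (t + 1) *ᵥ ws t - ((B t)ᵀ * P (t + 1) * B t) *ᵥ ws t := by
        rw [hQweq, Matrix.sub_mulVec]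
      rw [hlam (t + 1) ht1, hxsdyn t ht, hQwws, hGws]
      simp only [Matrix.mulVec_add, Matrix.mulVec_sub, Matrix.add_mulVec, Matrix.sub_mulVec,
        Matrix.neg_mulVec, Matrix.mulVec_mulVec, Matrix.mulVec_neg, Matrix.mul_assoc]
      abel
end
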